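/- arXiv:2503.16271 — 3 statements merged into one kernel-verified Lean document; each statement's English description precedes it below -/
import Mathlib

section
/- Let N, K be positive natural numbers, β ≥ 0, and let a, b : Fin N → Fin K → ℝ be the score matrices of a model on two datasets X' and X''. Let p(c) and q(c) be the Gibbs posteriors over classifiers c : Fin N → Fin K built from a and b respectively at inverse temperature β, and let the prior be uniform, π(c) = 1/K^N. Then the empirical posterior agreement kernel satisfies log(∑_{c : Fin N → Fin K} p(c) q(c) / π(c)) = log(K^N · ∏_{i=1}^N ∑_{j=1}^K p_i(j) q_i(j)), where p_i(j) = exp(β·(a i j)) / ∑_{l} exp(β·(a i l)) and q_i(j) = exp(β·(b i j)) / ∑_{l} exp(β·(b i l)). -/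
open Finset Real

/-- The Gibbs posterior over classifiers `c : Fin N → Fin K` for the score
matrix `F` at inverse temperature `β`. -/
noncomputable def gibbsPosterior {N K : ℕ} (β : ℝ) (F : Fin N → Fin K → ℝ)
    (c : Fin N → Fin K) : ℝ :=
  Real.exp (β * ∑ i : Fin N, F i (c i)) /
    ∑ c' : Fin N → Fin K, Real.exp (β * ∑ i : Fin N, F i (c' i))

/-- The per-observation softmax posterior for row `i` of the score matrix `F`
at inverse temperature `β`. -/
noncomputable def softmaxPosterior {N K : ℕ} (β : ℝ) (F : Fin N → Fin K → ℝ)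
    (i : Fin N) (j : Fin K) : ℝ :=
  Real.exp (β * F i j) / ∑ l : Fin K, Real.exp (β * F i l)

/-! Both the Gibbs weight `exp (β ∑ᵢ F i (c i))` and its partition function factorize over the
observations (a sum over classifiers of a product of per-row terms is a product of row sums), so
a Gibbs posterior is the product of its per-row softmax posteriors. The sum over classifiers of
`p(c) q(c)` is then again a product of row sums, and the uniform prior contributes `K ^ N`. -/

theorem gibbsPosterior_eq_prod_softmaxPosterior {N K : ℕ} (β : ℝ) (F : Fin N → Fin K → ℝ)
    (c : Fin N → Fin K) :
    gibbsPosterior β F c = ∏ i, softmaxPosterior β F i (c i) := by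
  have hweight : ∀ c' : Fin N → Fin K,
      exp (β * ∑ i, F i (c' i)) = ∏ i, exp (β * F i (c' i)) := fun c' => by
    rw [mul_sum, exp_sum]
  rw [gibbsPosterior, Fintype.sum_congr _ _ hweight,
    ← Fintype.prod_sum fun i j => exp (β * F i j), hweight c,
    ← prod_div_distrib]
  rfl

theorem empirical_posterior_agreement_kernel_formula_general (N K : ℕ)
    (β : ℝ)
    (a b : Fin N → Fin K → ℝ) :
    Real.log (∑ c : Fin N → Fin K,
        gibbsPosterior β a c * gibbsPosterior β b c / (1 / (K : ℝ) ^ N)) =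
      Real.log ((K : ℝ) ^ N *
        ∏ i : Fin N, ∑ j : Fin K,
          softmaxPosterior β a i j * softmaxPosterior β b i j) := by
  have hsummand : ∀ c : Fin N → Fin K,
      gibbsPosterior β a c * gibbsPosterior β b c / (1 / (K : ℝ) ^ N) =
        (K : ℝ) ^ N * ∏ i, softmaxPosterior β a i (c i) * softmaxPosterior β b i (c i) :=
    fun c => by
      rw [gibbsPosterior_eq_prod_softmaxPosterior, gibbsPosterior_eq_prod_softmaxPosterior,
        ← prod_mul_distrib, div_div_eq_mul_div, div_one, mul_comm]
  rw [Fintype.sum_congr _ _ hsummand, ← mul_sum,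
    ← Fintype.prod_sum fun i j => softmaxPosterior β a i j * softmaxPosterior β b i j]

/-- **Theorem 2 (operative formula for the empirical posterior agreement
kernel).** With uniform prior `π(c) = 1 / K ^ N` over the `K ^ N` classifiers,
`log (∑ c, p(c) q(c) / π(c)) = log (K ^ N · ∏ i, ∑ j, pᵢ(j) qᵢ(j))`. -/
theorem empirical_posterior_agreement_kernel_formula (N K : ℕ)
    (hN : 0 < N) (hK : 0 < K) (β : ℝ) (hβ : 0 ≤ β)
    (a b : Fin N → Fin K → ℝ) :
    Real.log (∑ c : Fin N → Fin K,
        gibbsPosterior β a c * gibbsPosterior β b c / (1 / (K : ℝ) ^ N)) =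
      Real.log ((K : ℝ) ^ N *
        ∏ i : Fin N, ∑ j : Fin K,
          softmaxPosterior β a i j * softmaxPosterior β b i j) :=
  empirical_posterior_agreement_kernel_formula_general N K β a b
end

section
/- Let N, K be positive natural numbers with K ≥ 2, and let a, b : Fin N → Fin K → ℝ be score matrices such that for every observation i there is a class j*_i that is the unique strict maximizer of both j ↦ a i j and j ↦ b i j. Then the normalized empirical posterior agreement kernel converges to its maximal value log K as β → ∞: lim_{β → ∞} (1/N) · log(K^N · ∏_{i=1}^N ∑_{j=1}^K p_i(j) q_i(j)) = log K, where p_i and q_i are the softmaxes of the rows a i and b i at inverse temperature β. -/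
open Finset Real Filter

lemma sum_exp_pos {K : ℕ} (hK : 0 < K) (f : Fin K → ℝ) :
    0 < ∑ l : Fin K, Real.exp (f l) := by
  haveI : Nonempty (Fin K) := Fin.pos_iff_nonempty.mp hK
  exact Finset.sum_pos (fun l _ => Real.exp_pos _) Finset.univ_nonempty

lemma softmax_pos {N K : ℕ} (hK : 0 < K) (β : ℝ) (F : Fin N → Fin K → ℝ)
    (i : Fin N) (j : Fin K) : 0 < softmaxPosterior β F i j :=
  div_pos (Real.exp_pos _) (sum_exp_pos hK _)

lemma softmax_le_one {N K : ℕ} (hK : 0 < K) (β : ℝ) (F : Fin N → Fin K → ℝ)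
    (i : Fin N) (j : Fin K) : softmaxPosterior β F i j ≤ 1 := by
  rw [softmaxPosterior, div_le_one (sum_exp_pos hK _)]
  exact Finset.single_le_sum (f := fun l => Real.exp (β * F i l))
    (fun l _ => (Real.exp_pos _).le) (Finset.mem_univ j)

lemma sum_softmax {N K : ℕ} (hK : 0 < K) (β : ℝ) (F : Fin N → Fin K → ℝ)
    (i : Fin N) : ∑ j : Fin K, softmaxPosterior β F i j = 1 := by
  simp only [softmaxPosterior]
  rw [← Finset.sum_div, div_self (sum_exp_pos hK _).ne']

lemma softmax_tendsto_one {N K : ℕ} (F : Fin N → Fin K → ℝ)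
    (i : Fin N) (jstar : Fin K) (h : ∀ j : Fin K, j ≠ jstar → F i j < F i jstar) :
    Tendsto (fun β : ℝ => softmaxPosterior β F i jstar) atTop (nhds 1) := by
  have heq : ∀ β : ℝ, softmaxPosterior β F i jstar =
      (∑ l : Fin K, Real.exp (β * (F i l - F i jstar)))⁻¹ := by
    intro β
    rw [softmaxPosterior, eq_comm, inv_eq_iff_eq_inv, inv_div, eq_div_iff (Real.exp_pos _).ne',
      Finset.sum_mul]
    congr 1; ext l
    rw [← Real.exp_add]; ring_nf
  simp only [heq]
  have hsum : Tendsto (fun β : ℝ => ∑ l : Fin K, Real.exp (β * (F i l - F i jstar)))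
      atTop (nhds 1) := by
    have h1 : (1 : ℝ) = ∑ l : Fin K, if l = jstar then (1:ℝ) else 0 := by simp
    rw [h1]
    apply tendsto_finset_sum
    intro l _
    by_cases hl : l = jstar
    · simp [hl]
    · simp only [hl, if_false]
      have hneg : F i l - F i jstar < 0 := sub_neg.mpr (h l hl)
      have : Tendsto (fun β : ℝ => β * (F i l - F i jstar)) atTop atBot :=
        tendsto_id.atTop_mul_const_of_neg hneg
      exact Real.tendsto_exp_atBot.comp this
  simpa using hsum.inv₀ one_ne_zero

/-- **Matching MAP predictions.** If for every observation there is a class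
that is the unique strict maximizer of both score rows, then the normalized
empirical posterior agreement kernel converges to `log K` as `β → ∞`. -/
theorem pa_kernel_tendsto_log_K_of_matching_maps (N K : ℕ)
    (hN : 0 < N) (hK : 2 ≤ K) (a b : Fin N → Fin K → ℝ)
    (hmatch : ∀ i : Fin N, ∃ jstar : Fin K,
      (∀ j : Fin K, j ≠ jstar → a i j < a i jstar) ∧
      (∀ j : Fin K, j ≠ jstar → b i j < b i jstar)) :
    Tendsto (fun β : ℝ =>
        (1 / (N : ℝ)) *
          Real.log ((K : ℝ) ^ N *
            ∏ i : Fin N, ∑ j : Fin K,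
              softmaxPosterior β a i j * softmaxPosterior β b i j))
      atTop (nhds (Real.log K)) := by
  have hK0 : 0 < K := lt_of_lt_of_le two_pos hK
  set S : Fin N → ℝ → ℝ := fun i β =>
    ∑ j : Fin K, softmaxPosterior β a i j * softmaxPosterior β b i j with hS
  have hSpos : ∀ i β, 0 < S i β := by
    intro i β
    haveI : Nonempty (Fin K) := Fin.pos_iff_nonempty.mp hK0
    exact Finset.sum_pos
      (fun j _ => mul_pos (softmax_pos hK0 β a i j) (softmax_pos hK0 β b i j))
      Finset.univ_nonempty
  have hSle : ∀ i β, S i β ≤ 1 := by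
    intro i β
    calc S i β ≤ ∑ j : Fin K, softmaxPosterior β a i j :=
          Finset.sum_le_sum (fun j _ =>
            mul_le_of_le_one_right (softmax_pos hK0 β a i j).le (softmax_le_one hK0 β b i j))
      _ = 1 := sum_softmax hK0 β a i
  have hStend : ∀ i : Fin N, Tendsto (fun β => S i β) atTop (nhds 1) := by
    intro i
    obtain ⟨jstar, ha, hb⟩ := hmatch i
    have hlb : Tendsto (fun β : ℝ =>
        softmaxPosterior β a i jstar * softmaxPosterior β b i jstar) atTop (nhds 1) := by
      simpa using (softmax_tendsto_one a i jstar ha).mul (softmax_tendsto_one b i jstar hb)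
    refine tendsto_of_tendsto_of_tendsto_of_le_of_le hlb tendsto_const_nhds ?_ ?_
    · intro β
      exact Finset.single_le_sum
        (f := fun j => softmaxPosterior β a i j * softmaxPosterior β b i j)
        (fun j _ => (mul_pos (softmax_pos hK0 β a i j) (softmax_pos hK0 β b i j)).le)
        (Finset.mem_univ jstar)
    · intro β; exact hSle i β
  have hlog : ∀ i : Fin N, Tendsto (fun β => Real.log (S i β)) atTop (nhds 0) := by
    intro i
    simpa using (hStend i).log one_ne_zero
  have hNne : (N : ℝ) ≠ 0 := Nat.cast_ne_zero.mpr hN.ne'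
  have heq : ∀ β : ℝ,
      (1 / (N : ℝ)) * Real.log ((K : ℝ) ^ N * ∏ i : Fin N, S i β) =
        Real.log K + (1 / (N : ℝ)) * ∑ i : Fin N, Real.log (S i β) := by
    intro β
    have hprodne : (∏ i : Fin N, S i β) ≠ 0 :=
      (Finset.prod_pos (fun i _ => hSpos i β)).ne'
    rw [Real.log_mul (by positivity) hprodne, Real.log_pow,
      Real.log_prod (fun i _ => (hSpos i β).ne')]
    field_simp
  simp only [hS] at heq ⊢
  rw [show nhds (Real.log K) = nhds (Real.log K + (1 / (N:ℝ)) * 0) by rw [mul_zero, add_zero]]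
  refine Tendsto.congr (fun β => (heq β).symm) ?_
  have := tendsto_const_nhds (x := Real.log K) (f := atTop (α := ℝ)) |>.add
    ((tendsto_finset_sum Finset.univ (fun i (_ : i ∈ Finset.univ) => hlog i)).const_mul (1 / (N:ℝ)))
  simpa using this
end

section
/- Let N, K be positive natural numbers with K ≥ 2, and let a : Fin N → Fin K → ℝ be a score matrix such that every row j ↦ a i j has a unique strict maximizer. If the two datasets induce identical scores, i.e. b = a (as for a classifier whose probabilistic response is unaffected by the shift), then the PA measure attains its maximal value: sup_{β ≥ 0} (1/N) · log(K^N · ∏_{i=1}^N ∑_{j=1}^K p_i(j)²) = log K, where p_i is the softmax of the row a i at inverse temperature β. -/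
/-!
With `b = a` the normalised kernel is `log K + (1/N) ∑ᵢ log ∑ⱼ pᵢ(j)²`, and
`∑ⱼ pᵢ(j)² ≤ (∑ⱼ pᵢ(j))² = 1`, so it never exceeds `log K`. As `β → ∞` each softmax
concentrates on the unique maximiser of its row, so `∑ⱼ pᵢ(j)² → 1` and the kernel tends to
`log K`; hence `log K` is the supremum.
-/

open Finset Real Filter Topology

section Softmax

variable {N K : ℕ} (β : ℝ) (F : Fin N → Fin K → ℝ) (i : Fin N)

lemma sum_exp_mul_pos [Nonempty (Fin K)] : 0 < ∑ l : Fin K, exp (β * F i l) :=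
  sum_pos (fun _ _ => exp_pos _) univ_nonempty

lemma softmaxPosterior_pos [Nonempty (Fin K)] (j : Fin K) : 0 < softmaxPosterior β F i j :=
  div_pos (exp_pos _) (sum_exp_mul_pos β F i)

lemma sum_softmaxPosterior [Nonempty (Fin K)] : ∑ j : Fin K, softmaxPosterior β F i j = 1 := by
  unfold softmaxPosterior
  rw [← sum_div, div_self (sum_exp_mul_pos β F i).ne']

lemma sum_sq_softmaxPosterior_pos [Nonempty (Fin K)] :
    0 < ∑ j : Fin K, softmaxPosterior β F i j ^ 2 :=
  sum_pos (fun j _ => pow_pos (softmaxPosterior_pos β F i j) 2) univ_nonempty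

lemma sum_sq_softmaxPosterior_le_one [Nonempty (Fin K)] :
    ∑ j : Fin K, softmaxPosterior β F i j ^ 2 ≤ 1 := by
  calc ∑ j : Fin K, softmaxPosterior β F i j ^ 2
      ≤ (∑ j : Fin K, softmaxPosterior β F i j) ^ 2 :=
        sum_sq_le_sq_sum_of_nonneg fun j _ => (softmaxPosterior_pos β F i j).le
    _ = 1 := by rw [sum_softmaxPosterior, one_pow]

lemma softmaxPosterior_eq_sub (m : ℝ) (j : Fin K) :
    softmaxPosterior β F i j =
      exp (β * (F i j - m)) / ∑ l : Fin K, exp (β * (F i l - m)) := by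
  simp only [mul_sub, exp_sub, ← sum_div]
  exact (div_div_div_cancel_right₀ (exp_ne_zero _) _ _).symm

end Softmax

section ZeroTemperatureLimit

variable {N K : ℕ} {F : Fin N → Fin K → ℝ} {i : Fin N} {jstar : Fin K}

lemma tendsto_exp_mul_sub_atTop (hmax : ∀ j, j ≠ jstar → F i j < F i jstar) (j : Fin K) :
    Tendsto (fun β : ℝ => exp (β * (F i j - F i jstar))) atTop
      (𝓝 (if j = jstar then 1 else 0)) := by
  by_cases hj : j = jstar
  · simp [hj]
  · rw [if_neg hj]
    exact tendsto_exp_atBot.comp <|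
      tendsto_id.atTop_mul_const_of_neg (sub_neg.mpr (hmax j hj))

lemma tendsto_softmaxPosterior_atTop (hmax : ∀ j, j ≠ jstar → F i j < F i jstar)
    (j : Fin K) :
    Tendsto (fun β : ℝ => softmaxPosterior β F i j) atTop
      (𝓝 (if j = jstar then 1 else 0)) := by
  have hden : Tendsto (fun β : ℝ => ∑ l : Fin K, exp (β * (F i l - F i jstar))) atTop (𝓝 1) := by
    simpa using tendsto_finsetSum univ fun l _ => tendsto_exp_mul_sub_atTop hmax l
  simpa only [div_one] using
    ((tendsto_exp_mul_sub_atTop hmax j).div hden one_ne_zero).congr fun β =>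
      (softmaxPosterior_eq_sub β F i (F i jstar) j).symm

lemma tendsto_sum_sq_softmaxPosterior_atTop (hmax : ∀ j, j ≠ jstar → F i j < F i jstar) :
    Tendsto (fun β : ℝ => ∑ j : Fin K, softmaxPosterior β F i j ^ 2) atTop (𝓝 1) := by
  simpa [ite_pow] using
    tendsto_finsetSum univ fun j _ => (tendsto_softmaxPosterior_atTop hmax j).pow 2

end ZeroTemperatureLimit

lemma one_div_mul_log_pow_mul {N : ℕ} (hN : 0 < N) {K P : ℝ} (hK : 0 < K) (hP : 0 < P) :
    1 / (N : ℝ) * log (K ^ N * P) = log K + log P / N := by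
  rw [log_mul (pow_pos hK N).ne' hP.ne', log_pow]
  field_simp

lemma sSup_eq_of_forall_le_of_tendsto_atTop {f : ℝ → ℝ} {c a : ℝ} (hle : ∀ β, a ≤ β → f β ≤ c)
    (hlim : Tendsto f atTop (𝓝 c)) : sSup {x : ℝ | ∃ β : ℝ, a ≤ β ∧ x = f β} = c := by
  refine csSup_eq_of_forall_le_of_forall_lt_exists_gt ⟨f a, a, le_rfl, rfl⟩ ?_ fun w hw => ?_
  · rintro x ⟨β, hβ, rfl⟩
    exact hle β hβ
  · obtain ⟨β, hβa, hβw⟩ := ((eventually_ge_atTop a).and (hlim.eventually_const_lt hw)).exists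
    exact ⟨f β, ⟨β, hβa, rfl⟩, hβw⟩

theorem pa_measure_eq_log_K_of_identical_scores_general (N K : ℕ)
    (hN : 0 < N) (a : Fin N → Fin K → ℝ)
    (hmax : ∀ i : Fin N, ∃ jstar : Fin K,
      ∀ j : Fin K, j ≠ jstar → a i j < a i jstar) :
    sSup {x : ℝ | ∃ β : ℝ, 0 ≤ β ∧
        x = (1 / (N : ℝ)) *
          Real.log ((K : ℝ) ^ N *
            ∏ i : Fin N, ∑ j : Fin K, (softmaxPosterior β a i j) ^ 2)} =
      Real.log K := by
  have : Nonempty (Fin K) := ⟨(hmax ⟨0, hN⟩).choose⟩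
  have hK : (0 : ℝ) < K := by simpa [Fin.pos_iff_nonempty] using this
  set P : ℝ → ℝ := fun β => ∏ i : Fin N, ∑ j : Fin K, softmaxPosterior β a i j ^ 2
  have hP_pos (β : ℝ) : 0 < P β := prod_pos fun i _ => sum_sq_softmaxPosterior_pos β a i
  have hP_le_one (β : ℝ) : P β ≤ 1 :=
    prod_le_one (fun i _ => (sum_sq_softmaxPosterior_pos β a i).le)
      fun i _ => sum_sq_softmaxPosterior_le_one β a i
  have hP_lim : Tendsto P atTop (𝓝 1) := by
    simpa using tendsto_finsetProd univ fun i _ =>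
      tendsto_sum_sq_softmaxPosterior_atTop (hmax i).choose_spec
  apply sSup_eq_of_forall_le_of_tendsto_atTop
  · intro β _
    rw [one_div_mul_log_pow_mul hN hK (hP_pos β)]
    exact add_le_of_nonpos_right <|
      div_nonpos_of_nonpos_of_nonneg (log_nonpos (hP_pos β).le (hP_le_one β)) N.cast_nonneg
  · have hlog : Tendsto (fun β => log K + log (P β) / N) atTop (𝓝 (log K + log 1 / N)) :=
      tendsto_const_nhds.add ((hP_lim.log one_ne_zero).div_const _)
    rw [log_one, zero_div, add_zero] at hlog
    exact hlog.congr fun β => (one_div_mul_log_pow_mul hN hK (hP_pos β)).symm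

/-- **Maximal robustness of an unaffected model.** If every row of the score
matrix `a` has a unique strict maximizer and the two datasets induce identical
scores (`b = a`), then the PA measure attains its maximal value `log K`:
`sup_{β ≥ 0} (1/N) · log (K ^ N · ∏ᵢ ∑ⱼ pᵢ(j)²) = log K`. -/
theorem pa_measure_eq_log_K_of_identical_scores (N K : ℕ)
    (hN : 0 < N) (hK : 2 ≤ K) (a : Fin N → Fin K → ℝ)
    (hmax : ∀ i : Fin N, ∃ jstar : Fin K,
      ∀ j : Fin K, j ≠ jstar → a i j < a i jstar) :
    sSup {x : ℝ | ∃ β : ℝ, 0 ≤ β ∧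
        x = (1 / (N : ℝ)) *
          Real.log ((K : ℝ) ^ N *
            ∏ i : Fin N, ∑ j : Fin K, (softmaxPosterior β a i j) ^ 2)} =
      Real.log K :=
  pa_measure_eq_log_K_of_identical_scores_general N K hN a hmax
end
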